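/- arXiv:2511.15361 — 3 statements merged into one kernel-verified Lean document; each statement's English description precedes it below -/
import Mathlib

section
/- Let f be a natural number and set n = 5f+1. Let B ⊆ {0, 1, ..., n-1} with |B| ≤ f. Then for every natural number r₀ there exists an index i with r₀ ≤ i ≤ r₀ + 2f such that (i mod n) ∉ B and ((i+1) mod n) ∉ B. -/
theorem stmt_3 (f : ℕ) (B : Finset ℕ)
    (hB : B ⊆ Finset.range (5 * f + 1)) (hBcard : B.card ≤ f) :
    ∀ r₀ : ℕ, ∃ i : ℕ, r₀ ≤ i ∧ i ≤ r₀ + 2 * f ∧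
      i % (5 * f + 1) ∉ B ∧ (i + 1) % (5 * f + 1) ∉ B := by
  intro r₀
  set n := 5 * f + 1 with hn
  by_contra hcon
  push_neg at hcon
  -- helper: distinct residues
  have hmodne : ∀ a b : ℕ, a < b → b - a < n → a % n ≠ b % n := by
    intro a b hab hlt h
    have hd : n ∣ b - a := (Nat.modEq_iff_dvd' hab.le).mp h
    have := Nat.le_of_dvd (by omega) hd
    omega
  have hk : ∀ k ∈ Finset.range (f + 1), (r₀ + 2 * k) % n ∈ B ∨ (r₀ + 2 * k + 1) % n ∈ B := by
    intro k hkmem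
    simp only [Finset.mem_range] at hkmem
    have h1 := hcon (r₀ + 2 * k) (by omega) (by omega)
    by_contra h
    push_neg at h
    exact h.2 (h1 h.1)
  set g : ℕ → ℕ := fun k => if (r₀ + 2 * k) % n ∈ B then (r₀ + 2 * k) % n else (r₀ + 2 * k + 1) % n with hg
  have hmaps : ∀ k ∈ Finset.range (f + 1), g k ∈ B := by
    intro k hkmem
    rcases hk k hkmem with h | h
    · simp [hg, h]
    · by_cases h2 : (r₀ + 2 * k) % n ∈ B <;> simp [hg, h2, h]
  have hginj : ∀ k₁ ∈ Finset.range (f + 1), ∀ k₂ ∈ Finset.range (f + 1),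
      g k₁ = g k₂ → k₁ = k₂ := by
    intro k₁ h₁ k₂ h₂ heq
    simp only [Finset.mem_range] at h₁ h₂
    by_contra hne
    -- wlog k₁ < k₂
    have key : ∀ a b : ℕ, a ≤ f → b ≤ f → a < b →
        g a ≠ g b := by
      intro a b ha hb hab
      have h3f : 1 ≤ f := by omega
      have d1 := hmodne (r₀ + 2 * a) (r₀ + 2 * b) (by omega) (by omega)
      have d2 := hmodne (r₀ + 2 * a) (r₀ + 2 * b + 1) (by omega) (by omega)
      have d3 := hmodne (r₀ + 2 * a + 1) (r₀ + 2 * b) (by omega) (by omega)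
      have d4 := hmodne (r₀ + 2 * a + 1) (r₀ + 2 * b + 1) (by omega) (by omega)
      by_cases c1 : (r₀ + 2 * a) % n ∈ B <;>
        by_cases c2 : (r₀ + 2 * b) % n ∈ B <;>
        simp [hg, c1, c2, d1, d2, d3, d4]
    rcases Nat.lt_or_ge k₁ k₂ with h | h
    · exact key k₁ k₂ (by omega) (by omega) h heq
    · exact key k₂ k₁ (by omega) (by omega) (by omega) heq.symm
  have := Finset.card_le_card_of_injOn g hmaps hginj
  simp [Finset.card_range] at this
  omega
end

section
/- Let f be a natural number and V a finite set with |V| = 5f+1. Let F ⊆ V with |F| ≤ 3f, and let A, B ⊆ V be subsets with A ∩ B ⊆ F. Then it is not the case that both |A| ≥ 4f+1 and |B| ≥ 4f+1. -/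
theorem stmt_5 {α : Type*} [DecidableEq α] (f : ℕ) (V F A B : Finset α)
    (hV : V.card = 5 * f + 1) (hFV : F ⊆ V) (hF : F.card ≤ 3 * f)
    (hA : A ⊆ V) (hB : B ⊆ V) (hAB : A ∩ B ⊆ F) :
    ¬(4 * f + 1 ≤ A.card ∧ 4 * f + 1 ≤ B.card) := by
  rintro ⟨hA1, hB1⟩
  have hu : (A ∪ B).card ≤ 5 * f + 1 := hV ▸ Finset.card_le_card (Finset.union_subset hA hB)
  have hi : (A ∩ B).card ≤ 3 * f := le_trans (Finset.card_le_card hAB) hF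
  have := Finset.card_union_add_card_inter A B
  omega
end

section
/- Let f be a natural number, let A and B be finite sets with |A| = 4f+1 and |B| = 4f+1, and let R be a relation between A and B such that every a ∈ A is related to at least 3f+1 elements of B. Then there are at least 2f+1 elements b ∈ B each related to at least f+1 elements of A. -/
open Classical in
theorem stmt_9 {α β : Type*} [DecidableEq α] [DecidableEq β]
    (f : ℕ) (A : Finset α) (B : Finset β) (R : α → β → Prop)
    (hA : A.card = 4 * f + 1) (hB : B.card = 4 * f + 1)
    (hdeg : ∀ a ∈ A, 3 * f + 1 ≤ (B.filter (fun b => R a b)).card) :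
    2 * f + 1 ≤ (B.filter (fun b => f + 1 ≤ (A.filter (fun a => R a b)).card)).card := by
  set H := B.filter (fun b => f + 1 ≤ (A.filter (fun a => R a b)).card) with hH
  by_contra hc
  push_neg at hc
  have hHle : H.card ≤ 2 * f := by omega
  -- double counting
  have key : ∑ a ∈ A, (B.filter (fun b => R a b)).card
      = ∑ b ∈ B, (A.filter (fun a => R a b)).card := by
    simp_rw [Finset.card_filter]
    rw [Finset.sum_comm]
  have lower : (4 * f + 1) * (3 * f + 1) ≤ ∑ a ∈ A, (B.filter (fun b => R a b)).card := by
    calc (4 * f + 1) * (3 * f + 1) = ∑ _a ∈ A, (3 * f + 1) := by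
          rw [Finset.sum_const, hA, smul_eq_mul]
      _ ≤ _ := Finset.sum_le_sum hdeg
  have hHsub : H ⊆ B := Finset.filter_subset _ _
  have split : ∑ b ∈ B, (A.filter (fun a => R a b)).card
      = ∑ b ∈ H, (A.filter (fun a => R a b)).card
        + ∑ b ∈ B \ H, (A.filter (fun a => R a b)).card := by
    rw [← Finset.sum_union (Finset.disjoint_sdiff), Finset.union_sdiff_of_subset hHsub]
  have hub1 : ∑ b ∈ H, (A.filter (fun a => R a b)).card ≤ H.card * (4 * f + 1) := by
    calc _ ≤ ∑ _b ∈ H, (4 * f + 1) := by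
          refine Finset.sum_le_sum fun b _ => ?_
          rw [← hA]; exact Finset.card_filter_le _ _
      _ = H.card * (4 * f + 1) := by rw [Finset.sum_const, smul_eq_mul]
  have hub2 : ∑ b ∈ B \ H, (A.filter (fun a => R a b)).card ≤ (B \ H).card * f := by
    calc _ ≤ ∑ _b ∈ B \ H, f := by
          refine Finset.sum_le_sum fun b hb => ?_
          rcases Finset.mem_sdiff.mp hb with ⟨hbB, hbH⟩
          by_contra h
          exact hbH (Finset.mem_filter.mpr ⟨hbB, by omega⟩)
      _ = (B \ H).card * f := by rw [Finset.sum_const, smul_eq_mul]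
  have hcard : (B \ H).card = B.card - H.card := Finset.card_sdiff_of_subset hHsub
  have hHB : H.card ≤ B.card := Finset.card_le_card hHsub
  rw [hcard] at hub2
  rw [key, split] at lower
  have : (4 * f + 1) * (3 * f + 1) ≤ H.card * (4 * f + 1) + (B.card - H.card) * f := by
    omega
  rw [hB] at this
  have h2 : (4 * f + 1) * (3 * f + 1) ≤ 2 * f * (4 * f + 1) + (4 * f + 1) * f := by
    have : (4 * f + 1 - H.card) * f ≤ (4 * f + 1) * f := by
      exact Nat.mul_le_mul_right _ (by omega)
    nlinarith [hHle]
  nlinarith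
end
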